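/- The probability p_1 = 3·∫_0^1 ∫_0^1 (1-a)^3·(3 - (1-a)(3-b))/(3 - (1-a)(2-b))^2 db da equals (1593/16)·ln 3 - 107·ln 2 - 35. -/

import Mathlib

/-!
Writing `u = 3 - (1 - a) (2 - b)`, which is affine in `b`, the numerator `3 - (1 - a) (3 - b)`
equals `u - (1 - a)`, so the integrand is `(1 - a)^2 ∂_b (log u + (1 - a) / u)`. The inner
integral is therefore elementary in `a`, and the outer one has an explicit primitive built from
`(1 - a)^k`, `log (2 + a)` and `log (1 + 2 a)`.
-/

open MeasureTheory Real

theorem integral_div_sub_div_sq_affine {p q : ℝ} (hp : 0 < p) (hpq : 0 < p + q) :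
    ∫ b in (0:ℝ)..1, (q / (p + q * b) - q ^ 2 / (p + q * b) ^ 2) =
      log (p + q) - log p + q / (p + q) - q / p := by
  have hne : ∀ b ∈ Set.uIcc (0:ℝ) 1, p + q * b ≠ 0 := by
    intro b hb
    rw [Set.uIcc_of_le zero_le_one] at hb
    rcases le_total 0 q with hq | hq <;> nlinarith [hb.1, hb.2]
  have hderiv : ∀ b ∈ Set.uIcc (0:ℝ) 1, HasDerivAt (fun b => log (p + q * b) + q / (p + q * b))
      (q / (p + q * b) - q ^ 2 / (p + q * b) ^ 2) b := by
    intro b hb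
    have hu : HasDerivAt (fun b => p + q * b) q b := by
      simpa using ((hasDerivAt_id b).const_mul q).const_add p
    exact ((hu.log (hne b hb)).add ((hasDerivAt_const b q).div hu (hne b hb))).congr_deriv
      (by ring)
  have hint : IntervalIntegrable (fun b => q / (p + q * b) - q ^ 2 / (p + q * b) ^ 2) volume 0 1 :=
    ((continuousOn_const.div (by fun_prop) hne).sub
      (continuousOn_const.div (by fun_prop) fun b hb => pow_ne_zero 2 (hne b hb))).intervalIntegrable
  rw [intervalIntegral.integral_eq_sub_of_hasDerivAt hderiv hint]
  simp only [mul_one, mul_zero, add_zero]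
  ring

noncomputable def stitMarginal (a : ℝ) : ℝ :=
  (1 - a) ^ 2 * (log (2 + a) - log (1 + 2 * a) + (1 - a) / (2 + a) - (1 - a) / (1 + 2 * a))

theorem integral_stit_integrand_eq_stitMarginal {a : ℝ} (ha : 0 < 1 + 2 * a) :
    ∫ b in (0:ℝ)..1, (1 - a) ^ 3 * (3 - (1 - a) * (3 - b)) / (3 - (1 - a) * (2 - b)) ^ 2 =
      stitMarginal a := by
  have hpq : 0 < 1 + 2 * a + (1 - a) := by linarith
  calc ∫ b in (0:ℝ)..1, (1 - a) ^ 3 * (3 - (1 - a) * (3 - b)) / (3 - (1 - a) * (2 - b)) ^ 2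
      = ∫ b in (0:ℝ)..1, (1 - a) ^ 2 * ((1 - a) / (1 + 2 * a + (1 - a) * b)
          - (1 - a) ^ 2 / (1 + 2 * a + (1 - a) * b) ^ 2) := by
        refine intervalIntegral.integral_congr fun b hb => ?_
        rw [Set.uIcc_of_le zero_le_one] at hb
        have hu : 1 + 2 * a + (1 - a) * b ≠ 0 := by
          rcases le_total a 1 with h | h <;> nlinarith [hb.1, hb.2]
        rw [show 3 - (1 - a) * (2 - b) = 1 + 2 * a + (1 - a) * b by ring]
        field_simp
        ring
    _ = stitMarginal a := by
        rw [intervalIntegral.integral_const_mul, integral_div_sub_div_sq_affine ha hpq,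
          show 1 + 2 * a + (1 - a) = 2 + a by ring, stitMarginal]

/-- The constants `36` and `45/16` make the numerators `4/3 (1-a)^3 - 36` and `5/3 (1-a)^3 - 45/8`,
left over after integrating `(1-a)^2 log` by parts, vanish at the poles `a = -2` and `a = -1/2`. -/
noncomputable def stitMarginalPrimitive (a : ℝ) : ℝ :=
  (36 - (1 - a) ^ 3 / 3) * log (2 + a) + ((1 - a) ^ 3 / 3 - 45 / 16) * log (1 + 2 * a)
    + (1 - a) ^ 3 / 6 + 11 * (1 - a) ^ 2 / 8 + 81 * (1 - a) / 8

theorem hasDerivAt_stitMarginalPrimitive {a : ℝ} (ha : 0 < 1 + 2 * a) :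
    HasDerivAt stitMarginalPrimitive (stitMarginal a) a := by
  have h2a : 2 + a ≠ 0 := by linarith
  have h12a : 1 + a * 2 ≠ 0 := by linarith
  have hc : HasDerivAt (fun x : ℝ => 1 - x) (-1) a := by
    simpa using (hasDerivAt_id a).const_sub 1
  have hlog₁ : HasDerivAt (fun x : ℝ => log (2 + x)) (1 / (2 + a)) a := by
    simpa using ((hasDerivAt_id a).const_add 2).log h2a
  have hlog₂ : HasDerivAt (fun x : ℝ => log (1 + 2 * x)) (2 / (1 + 2 * a)) a := by
    simpa using (((hasDerivAt_id a).const_mul 2).const_add 1).log ha.ne'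
  have hc3 := hc.fun_pow 3
  have hsum := ((((((hc3.div_const 3).const_sub 36).mul hlog₁).add
    (((hc3.div_const 3).sub_const (45 / 16)).mul hlog₂)).add (hc3.div_const 6)).add
    ((hc.fun_pow 2).const_mul 11 |>.div_const 8)).add ((hc.const_mul 81).div_const 8)
  refine hsum.congr_deriv ?_
  rw [stitMarginal]
  push_cast
  -- `field_simp` rewrites `1 + 2 * a` as `1 + a * 2` before looking for `h12a`
  field_simp
  ring

theorem continuousOn_stitMarginal : ContinuousOn stitMarginal {a | 0 < 1 + 2 * a} := by
  have h₁ : ∀ a ∈ {a : ℝ | 0 < 1 + 2 * a}, 2 + a ≠ 0 := fun a (ha : 0 < 1 + 2 * a) => by linarith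
  have h₂ : ∀ a ∈ {a : ℝ | 0 < 1 + 2 * a}, 1 + 2 * a ≠ 0 := fun a (ha : 0 < 1 + 2 * a) => ha.ne'
  unfold stitMarginal
  fun_prop (disch := assumption)

theorem stit_p1_value :
    3 * (∫ a in (0:ℝ)..1, ∫ b in (0:ℝ)..1,
        (1 - a) ^ 3 * (3 - (1 - a) * (3 - b)) / (3 - (1 - a) * (2 - b)) ^ 2) =
      (1593 / 16) * Real.log 3 - 107 * Real.log 2 - 35 := by
  have hpos : ∀ a ∈ Set.uIcc (0:ℝ) 1, 0 < 1 + 2 * a := fun a ha => by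
    rw [Set.uIcc_of_le zero_le_one] at ha
    linarith [ha.1]
  rw [intervalIntegral.integral_congr fun a ha => integral_stit_integrand_eq_stitMarginal (hpos a ha),
    intervalIntegral.integral_eq_sub_of_hasDerivAt
      (fun a ha => hasDerivAt_stitMarginalPrimitive (hpos a ha))
      (continuousOn_stitMarginal.mono hpos).intervalIntegrable]
  norm_num [stitMarginalPrimitive]
  ring
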